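/- arXiv:2604.08234 — 2 statements merged into one kernel-verified Lean document; each statement's English description precedes it below -/
import Mathlib

section
/- Let 𝓘 = (I_1,…,I_t) be a sequence of coloring channels over Σ = [q] with I_i ∩ I_j = ∅ for all i ≠ j. Then cap(𝓘) = log_q max{ |I_1|, …, |I_t| }. -/
/-- The output of a single coloring channel `I`: the subsequence of `x`
consisting (in order) of the letters of `x` that belong to `I`. -/
def channelOutput {q : ℕ} (I : Finset (Fin q)) (x : List (Fin q)) : List (Fin q) :=
  x.filter (fun a => a ∈ I)

/-- The set `A_𝓘(n)` of all tuples of channel outputs over inputs of length `n`. -/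
def channelOutputs {q : ℕ} {ι : Type} (𝓘 : ι → Finset (Fin q)) (n : ℕ) :
    Set (ι → List (Fin q)) :=
  { y | ∃ x : List (Fin q), x.length = n ∧ y = fun i => channelOutput (𝓘 i) x }

/-- The capacity of a sequence of coloring channels:
`limsup_{n→∞} (1/n) log_q |A_𝓘(n)|`. -/
noncomputable def capacity {q : ℕ} {ι : Type} (𝓘 : ι → Finset (Fin q)) : ℝ :=
  Filter.atTop.limsup fun n : ℕ =>
    Real.logb q ((channelOutputs 𝓘 n).ncard : ℝ) / (n : ℝ)

/-- The binary entropy function (with `H(0) = H(1) = 0`). -/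
noncomputable def binH (x : ℝ) : ℝ :=
  -(x * Real.logb 2 x) - (1 - x) * Real.logb 2 (1 - x)

/-!
Let `M = max |I_i|`. Words of length `n` over a largest channel `I_{i₀}` pass through that
channel unchanged, so they have distinct outputs and `M ^ n ≤ |A_𝓘(n)|`. Conversely, disjointness
makes the output lengths `ℓ_i` sum to at most `n`; an output is determined by its length vector
(at most `(n + 1) ^ t` choices) together with words of lengths `ℓ_i` over the `I_i` (at most
`M ^ n` choices). The polynomial factor disappears in `(1 / n) log_q`, so the limit exists and
equals `log_q M`.
-/

open Finset Function Filter Topology Real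

section words

variable {α : Type*} [DecidableEq α]

def words (s : Finset α) (k : ℕ) : Finset (List α) :=
  (univ : Finset (Fin k → s)).image fun v => List.ofFn fun j => (v j : α)

theorem mem_words {s : Finset α} {k : ℕ} {l : List α} :
    l ∈ words s k ↔ l.length = k ∧ ∀ a ∈ l, a ∈ s := by
  constructor
  · intro hl
    obtain ⟨v, -, rfl⟩ := mem_image.1 hl
    simp
  · rintro ⟨rfl, hs⟩
    exact mem_image.2 ⟨fun j => ⟨l.get j, hs _ (l.get_mem j)⟩, mem_univ _, List.ofFn_get l⟩

theorem card_words (s : Finset α) (k : ℕ) : (words s k).card = s.card ^ k := by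
  rw [words, card_image_of_injective, card_univ, Fintype.card_fun, Fintype.card_coe,
    Fintype.card_fin]
  exact fun v w h => funext fun j => Subtype.ext (congrFun (List.ofFn_injective h) j)

end words

section channels

variable {q : ℕ} {ι : Type}

theorem channelOutput_eq_self {I : Finset (Fin q)} {x : List (Fin q)} (hx : ∀ a ∈ x, a ∈ I) :
    channelOutput I x = x :=
  List.filter_eq_self.2 fun a ha => decide_eq_true (hx a ha)

theorem length_channelOutput_cons (I : Finset (Fin q)) (a : Fin q) (x : List (Fin q)) :
    (channelOutput I (a :: x)).length = (channelOutput I x).length + if a ∈ I then 1 else 0 := by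
  by_cases ha : a ∈ I <;> simp [channelOutput, ha]

theorem channelOutputs_finite (𝓘 : ι → Finset (Fin q)) (n : ℕ) :
    (channelOutputs 𝓘 n).Finite := by
  convert (List.finite_length_eq (α := Fin q) n).image fun x i => channelOutput (𝓘 i) x
  ext y
  simp [channelOutputs, eq_comm]

theorem pow_card_le_ncard_channelOutputs (𝓘 : ι → Finset (Fin q)) (i : ι) (n : ℕ) :
    (𝓘 i).card ^ n ≤ (channelOutputs 𝓘 n).ncard := by
  have hinj : Set.InjOn (fun x j => channelOutput (𝓘 j) x) (words (𝓘 i) n) := by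
    intro x hx y hy hxy
    simpa only [channelOutput_eq_self (mem_words.1 hx).2, channelOutput_eq_self (mem_words.1 hy).2]
      using congrFun hxy i
  have hsub : (fun x j => channelOutput (𝓘 j) x) '' (words (𝓘 i) n) ⊆ channelOutputs 𝓘 n := by
    rintro _ ⟨x, hx, rfl⟩
    exact ⟨x, (mem_words.1 hx).1, rfl⟩
  calc (𝓘 i).card ^ n = (words (𝓘 i) n : Set (List (Fin q))).ncard := by
        rw [Set.ncard_coe_finset, card_words]
    _ = _ := hinj.ncard_image.symm
    _ ≤ (channelOutputs 𝓘 n).ncard := Set.ncard_le_ncard hsub (channelOutputs_finite 𝓘 n)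

variable [Fintype ι] {𝓘 : ι → Finset (Fin q)}

theorem sum_length_channelOutput_le (h𝓘 : Pairwise (Disjoint on 𝓘)) (x : List (Fin q)) :
    ∑ i, (channelOutput (𝓘 i) x).length ≤ x.length := by
  induction x with
  | nil => simp [channelOutput]
  | cons a x ih =>
    have hsingle : ∑ i, (if a ∈ 𝓘 i then 1 else 0) ≤ 1 := by
      rw [sum_boole, Nat.cast_id, card_le_one]
      intro i hi j hj
      by_contra hij
      exact disjoint_left.1 (h𝓘 hij) (mem_filter.1 hi).2 (mem_filter.1 hj).2
    simp only [length_channelOutput_cons, sum_add_distrib, List.length_cons]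
    omega

theorem mem_words_channelOutput (I : Finset (Fin q)) (x : List (Fin q)) :
    channelOutput I x ∈ words I (channelOutput I x).length :=
  mem_words.2 ⟨rfl, fun a ha => by simpa [channelOutput] using (List.mem_filter.1 ha).2⟩

theorem card_piFinset_words_le [DecidableEq ι] {M : ℕ} (hcard : ∀ i, (𝓘 i).card ≤ M)
    (ℓ : ι → ℕ) :
    (Fintype.piFinset fun i => words (𝓘 i) (ℓ i)).card ≤ M ^ ∑ i, ℓ i := by
  rw [Fintype.card_piFinset, ← prod_pow_eq_pow_sum]
  exact prod_le_prod' fun i _ => (card_words _ _).trans_le (Nat.pow_le_pow_left (hcard i) _)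

theorem ncard_channelOutputs_le (h𝓘 : Pairwise (Disjoint on 𝓘)) {M : ℕ} (hM : 0 < M)
    (hcard : ∀ i, (𝓘 i).card ≤ M) (n : ℕ) :
    (channelOutputs 𝓘 n).ncard ≤ (n + 1) ^ Fintype.card ι * M ^ n := by
  classical
  set S : Finset (ι → ℕ) :=
    (Fintype.piFinset fun _ => range (n + 1)).filter fun ℓ => ∑ i, ℓ i ≤ n
  set T : (ι → ℕ) → Finset (ι → List (Fin q)) := fun ℓ =>
    Fintype.piFinset fun i => words (𝓘 i) (ℓ i)
  have hsub : channelOutputs 𝓘 n ⊆ S.biUnion T := by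
    rintro _ ⟨x, rfl, rfl⟩
    refine mem_biUnion.2 ⟨fun i => (channelOutput (𝓘 i) x).length, mem_filter.2 ⟨?_, ?_⟩, ?_⟩
    · exact Fintype.mem_piFinset.2 fun i => mem_range_succ_iff.2 (List.length_filter_le _ _)
    · exact sum_length_channelOutput_le h𝓘 x
    · exact Fintype.mem_piFinset.2 fun i => mem_words_channelOutput _ _
  have hS : S.card ≤ (n + 1) ^ Fintype.card ι := by
    simpa using card_filter_le (Fintype.piFinset fun _ : ι => range (n + 1)) _
  have hT : ∀ ℓ ∈ S, (T ℓ).card ≤ M ^ n := fun ℓ hℓ =>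
    (card_piFinset_words_le hcard ℓ).trans (Nat.pow_le_pow_right hM (mem_filter.1 hℓ).2)
  calc (channelOutputs 𝓘 n).ncard ≤ (S.biUnion T).card := by
        simpa only [Set.ncard_coe_finset] using
          Set.ncard_le_ncard hsub (S.biUnion T).finite_toSet
    _ ≤ ∑ ℓ ∈ S, (T ℓ).card := card_biUnion_le
    _ ≤ S.card * M ^ n := sum_le_card_nsmul _ _ _ hT
    _ ≤ (n + 1) ^ Fintype.card ι * M ^ n := Nat.mul_le_mul_right _ hS

end channels

theorem tendsto_log_natCast_add_one_div_atTop :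
    Tendsto (fun n : ℕ => log (n + 1) / n) atTop (𝓝 0) := by
  have h := (tendsto_pow_log_div_mul_add_atTop 1 (-1) 1 one_ne_zero).comp
    (tendsto_atTop_add_const_right _ 1 tendsto_natCast_atTop_atTop)
  simpa [Function.comp_def] using h

theorem tendsto_logb_div_of_pow_le_of_le_mul_pow {b M : ℝ} (hb : 1 < b) (hM : 0 < M)
    {c : ℕ → ℝ} (k : ℕ) (hlow : ∀ n, M ^ n ≤ c n) (hupp : ∀ n, c n ≤ (n + 1) ^ k * M ^ n) :
    Tendsto (fun n => logb b (c n) / n) atTop (𝓝 (logb b M)) := by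
  have hlogb : ∀ n : ℕ, 0 < n → logb b (M ^ n) / n = logb b M := fun n hn => by
    rw [logb_pow]; field_simp
  have hlower : ∀ᶠ n : ℕ in atTop, logb b M ≤ logb b (c n) / n := by
    filter_upwards [eventually_gt_atTop 0] with n hn
    rw [← hlogb n hn]
    gcongr
    exact hlow n
  have hupper : ∀ᶠ n : ℕ in atTop,
      logb b (c n) / n ≤ logb b M + k / log b * (log (n + 1) / n) := by
    filter_upwards [eventually_gt_atTop 0] with n hn
    calc logb b (c n) / n ≤ logb b ((n + 1) ^ k * M ^ n) / n := by
          gcongr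
          exacts [(pow_pos hM n).trans_le (hlow n), hupp n]
      _ = logb b M + k / log b * (log (n + 1) / n) := by
          rw [logb_mul (by positivity) (by positivity), add_div, hlogb n hn, logb_pow, logb]
          ring
  have hlim : Tendsto (fun n : ℕ => logb b M + k / log b * (log (n + 1) / n)) atTop
      (𝓝 (logb b M)) := by
    simpa using (tendsto_log_natCast_add_one_div_atTop.const_mul (k / log b)).const_add (logb b M)
  exact tendsto_of_tendsto_of_tendsto_of_le_of_le' tendsto_const_nhds hlim hlower hupper

/-- the capacity of pairwise-disjoint coloring channels is
`log_q` of the largest channel size. -/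
theorem capacity_of_pairwise_disjoint (q t : ℕ) (hq : 2 ≤ q) (ht : 1 ≤ t)
    (𝓘 : Fin t → Finset (Fin q)) (hne : ∀ i, (𝓘 i).Nonempty)
    (hdisj : ∀ i j, i ≠ j → 𝓘 i ∩ 𝓘 j = ∅) :
    capacity 𝓘 = Real.logb q ((Finset.univ.sup fun i => (𝓘 i).card : ℕ) : ℝ) := by
  set M := Finset.univ.sup fun i => (𝓘 i).card
  obtain ⟨i₀, -, hi₀⟩ : ∃ i ∈ univ, M = (𝓘 i).card :=
    exists_mem_eq_sup univ ⟨⟨0, ht⟩, mem_univ _⟩ fun i => (𝓘 i).card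
  have hM : 0 < M := hi₀ ▸ (hne i₀).card_pos
  have hpairwise : Pairwise (Disjoint on 𝓘) := fun i j hij =>
    disjoint_iff_inter_eq_empty.2 (hdisj i j hij)
  have hq' : (1 : ℝ) < q := by exact_mod_cast hq
  refine (tendsto_logb_div_of_pow_le_of_le_mul_pow hq' (by positivity) t (fun n => ?_)
    (fun n => ?_)).limsup_eq
  · exact_mod_cast hi₀ ▸ pow_card_le_ncard_channelOutputs 𝓘 i₀ n
  · have hcard : ∀ i, (𝓘 i).card ≤ M := fun i => le_sup (f := fun i => (𝓘 i).card) (mem_univ i)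
    exact_mod_cast Fintype.card_fin t ▸ ncard_channelOutputs_le hpairwise hM hcard n
end

section
/- Let 𝓘 = (I_1,…,I_t), t ≥ 2, be an irreducible sequence of coloring channels over Σ = [q], and let E_𝓘 (ordered arbitrarily) be the sequence of all 2-element coloring channels given by the edges of the pairs graph of 𝓘. Then |A_𝓘(n)| = |A_{E_𝓘}(n)| for all n, and consequently cap(𝓘) = cap(E_𝓘). -/
/-!
Every channel output `x_I` is a word over `I`, and a word over `I` is determined by its
projections onto the pairs `{u, v} ⊆ I`: the first letters of two words over `I` must agree
because they are the first letters of their projections onto the pair they form. So `x_𝓘` is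
determined by the projections of `x` onto the edges of the pairs graph and onto the singletons
`{a}`, `a ∈ I`. Irreducibility makes the singletons redundant: a letter lying in no edge would
form a singleton channel `{a}` that no other channel meets, and `{a}` would split off. Hence the
two output maps have the same fibres, their images have the same size for every `n`, and the
capacities agree.
-/

theorem Set.ncard_image_eq_ncard_image_of_ker_eq {α β γ : Type*} {f : α → β} {g : α → γ}
    (hfg : ∀ a b, f a = f b ↔ g a = g b) (s : Set α) : (f '' s).ncard = (g '' s).ncard := by
  rcases s.eq_empty_or_nonempty with rfl | ⟨a₀, -⟩
  · simp
  set ψ := Function.extend f g fun _ => g a₀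
  have hψ : ∀ a, ψ (f a) = g a :=
    Function.FactorsThrough.extend_apply (fun a b h => (hfg a b).1 h) _
  have himage : ψ '' (f '' s) = g '' s := by
    rw [Set.image_image]
    exact Set.image_congr fun a _ => hψ a
  have hinj : Set.InjOn ψ (f '' s) := by
    rintro _ ⟨a, -, rfl⟩ _ ⟨b, -, rfl⟩ hab
    rw [hψ, hψ] at hab
    exact (hfg a b).2 hab
  rw [← himage, hinj.ncard_image]

theorem List.eq_of_forall_filter_mem_pair_eq {α : Type*} [DecidableEq α] {I : Finset α} :
    ∀ {y z : List α}, (∀ a ∈ y, a ∈ I) → (∀ a ∈ z, a ∈ I) →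
      (∀ u ∈ I, ∀ v ∈ I, y.filter (· ∈ ({u, v} : Finset α)) =
        z.filter (· ∈ ({u, v} : Finset α))) → y = z
  | [], [], _, _, _ => rfl
  | [], w :: _, _, hz, h => by simpa using h w (hz w (by simp)) w (hz w (by simp))
  | u :: _, [], hy, _, h => by simpa using h u (hy u (by simp)) u (hy u (by simp))
  | u :: y, w :: z, hy, hz, h => by
    have hu : u ∈ I := hy u (by simp)
    have hw : w ∈ I := hz w (by simp)
    obtain rfl : u = w := by
      have hhead := h u hu w hw
      rw [List.filter_cons_of_pos (by simp), List.filter_cons_of_pos (by simp)] at hhead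
      exact (List.cons.inj hhead).1
    congr 1
    refine eq_of_forall_filter_mem_pair_eq (fun a ha => hy a (by simp [ha]))
      (fun a ha => hz a (by simp [ha])) fun v hv v' hv' => ?_
    have hcons := h v hv v' hv'
    by_cases hmem : u ∈ ({v, v'} : Finset α)
    · rw [List.filter_cons_of_pos (by simpa using hmem),
        List.filter_cons_of_pos (by simpa using hmem)] at hcons
      exact (List.cons.inj hcons).2
    · rwa [List.filter_cons_of_neg (by simpa using hmem),
        List.filter_cons_of_neg (by simpa using hmem)] at hcons

theorem channelOutput_channelOutput_of_subset {q : ℕ} {e I : Finset (Fin q)} (he : e ⊆ I)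
    (x : List (Fin q)) : channelOutput e (channelOutput I x) = channelOutput e x := by
  simp only [channelOutput, List.filter_filter]
  refine List.filter_congr fun a _ => ?_
  by_cases ha : a ∈ e
  · simp [ha, he ha]
  · simp [ha]

theorem channelOutput_eq_of_forall_pair_eq {q : ℕ} {I : Finset (Fin q)} {x x' : List (Fin q)}
    (h : ∀ u ∈ I, ∀ v ∈ I, channelOutput {u, v} x = channelOutput {u, v} x') :
    channelOutput I x = channelOutput I x' := by
  refine List.eq_of_forall_filter_mem_pair_eq (I := I) ?_ ?_ fun u hu v hv => ?_
  · simp [channelOutput]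
  · simp [channelOutput]
  · have huv : ({u, v} : Finset (Fin q)) ⊆ I :=
      Finset.insert_subset hu (Finset.singleton_subset_iff.2 hv)
    change channelOutput {u, v} (channelOutput I x) = channelOutput {u, v} (channelOutput I x')
    rw [channelOutput_channelOutput_of_subset huv, channelOutput_channelOutput_of_subset huv]
    exact h u hu v hv

def channelOutputTuple {q : ℕ} {ι : Type} (𝓘 : ι → Finset (Fin q)) (x : List (Fin q)) :
    ι → List (Fin q) :=
  fun i => channelOutput (𝓘 i) x

theorem channelOutputs_eq_image {q : ℕ} {ι : Type} (𝓘 : ι → Finset (Fin q)) (n : ℕ) :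
    channelOutputs 𝓘 n = channelOutputTuple 𝓘 '' {x | x.length = n} :=
  Set.ext fun _ => exists_congr fun _ => and_congr_right fun _ => eq_comm

section Refinement

variable {q : ℕ} {ι κ : Type} {𝓘 : ι → Finset (Fin q)} {𝓙 : κ → Finset (Fin q)}

theorem channelOutputTuple_eq_iff (h𝓙 : ∀ k, ∃ i, 𝓙 k ⊆ 𝓘 i)
    (h𝓘 : ∀ i, ∀ u ∈ 𝓘 i, ∀ v ∈ 𝓘 i, ∃ k, {u, v} ⊆ 𝓙 k) (x x' : List (Fin q)) :
    channelOutputTuple 𝓘 x = channelOutputTuple 𝓘 x' ↔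
      channelOutputTuple 𝓙 x = channelOutputTuple 𝓙 x' := by
  constructor
  · intro hx
    funext k
    obtain ⟨i, hki⟩ := h𝓙 k
    change channelOutput (𝓙 k) x = channelOutput (𝓙 k) x'
    rw [← channelOutput_channelOutput_of_subset hki x,
      ← channelOutput_channelOutput_of_subset hki x']
    exact congrArg _ (congrFun hx i)
  · intro hx
    funext i
    refine channelOutput_eq_of_forall_pair_eq fun u hu v hv => ?_
    obtain ⟨k, hk⟩ := h𝓘 i u hu v hv
    rw [← channelOutput_channelOutput_of_subset hk x,
      ← channelOutput_channelOutput_of_subset hk x']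
    exact congrArg _ (congrFun hx k)

theorem ncard_channelOutputs_eq (h𝓙 : ∀ k, ∃ i, 𝓙 k ⊆ 𝓘 i)
    (h𝓘 : ∀ i, ∀ u ∈ 𝓘 i, ∀ v ∈ 𝓘 i, ∃ k, {u, v} ⊆ 𝓙 k) (n : ℕ) :
    (channelOutputs 𝓘 n).ncard = (channelOutputs 𝓙 n).ncard := by
  rw [channelOutputs_eq_image, channelOutputs_eq_image]
  exact Set.ncard_image_eq_ncard_image_of_ker_eq (channelOutputTuple_eq_iff h𝓙 h𝓘) _

end Refinement

theorem exists_mem_ne_of_not_separable {q : ℕ} {ι : Type} [Fintype ι] [DecidableEq ι]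
    [Nontrivial ι] {𝓘 : ι → Finset (Fin q)} (hsub : ∀ i j, i ≠ j → ¬ 𝓘 i ⊆ 𝓘 j)
    (hnsep : ¬ ∃ S : Finset ι, S.Nonempty ∧ S ≠ Finset.univ ∧
      (S.biUnion 𝓘) ∩ (Sᶜ.biUnion 𝓘) = ∅)
    {i : ι} {a : Fin q} (ha : a ∈ 𝓘 i) : ∃ j, a ∈ 𝓘 j ∧ ∃ b ∈ 𝓘 j, b ≠ a := by
  by_contra! hlonely
  have hsingleton : ∀ j, a ∈ 𝓘 j → 𝓘 j = {a} := fun j haj =>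
    Finset.eq_singleton_iff_unique_mem.2 ⟨haj, hlonely j haj⟩
  refine hnsep ⟨{i}, Finset.singleton_nonempty i, Finset.singleton_ne_univ i, ?_⟩
  ext b
  simp only [Finset.singleton_biUnion, hsingleton i ha, Finset.mem_inter, Finset.mem_singleton,
    Finset.mem_biUnion, Finset.mem_compl, Finset.notMem_empty, iff_false, not_and]
  rintro rfl ⟨j, hji, hbj⟩
  exact hsub i j (Ne.symm hji) (by rw [hsingleton i ha, hsingleton j hbj])

theorem pairs_graph_capacity_general (q t : ℕ) (ht : 2 ≤ t)
    (𝓘 : Fin t → Finset (Fin q))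
    (hsub : ∀ i j : Fin t, i ≠ j → ¬ 𝓘 i ⊆ 𝓘 j)
    (hnsep : ¬ ∃ S : Finset (Fin t), S.Nonempty ∧ S ≠ Finset.univ ∧
      (S.biUnion 𝓘) ∩ (Sᶜ.biUnion 𝓘) = ∅) :
    (∀ n : ℕ, (channelOutputs 𝓘 n).ncard =
      (channelOutputs
        (fun e : {e : Finset (Fin q) // e.card = 2 ∧ ∃ i, e ⊆ 𝓘 i} => e.1) n).ncard) ∧
    capacity 𝓘 =
      capacity (fun e : {e : Finset (Fin q) // e.card = 2 ∧ ∃ i, e ⊆ 𝓘 i} => e.1) := by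
  have : Nontrivial (Fin t) := Fin.nontrivial_iff_two_le.2 ht
  have hpair : ∀ i, ∀ u ∈ 𝓘 i, ∀ v ∈ 𝓘 i, u ≠ v →
      ∃ e : {e : Finset (Fin q) // e.card = 2 ∧ ∃ i, e ⊆ 𝓘 i}, {u, v} ⊆ e.1 :=
    fun i u hu v hv huv =>
      ⟨⟨{u, v}, Finset.card_pair huv, i,
        Finset.insert_subset hu (Finset.singleton_subset_iff.2 hv)⟩, le_rfl⟩
  have hcard := ncard_channelOutputs_eq
      (𝓙 := fun e : {e : Finset (Fin q) // e.card = 2 ∧ ∃ i, e ⊆ 𝓘 i} => e.1)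
      (fun e => e.2.2) fun i u hu v hv => by
    by_cases huv : u = v
    · obtain ⟨j, huj, b, hb, hba⟩ := exists_mem_ne_of_not_separable hsub hnsep hu
      obtain ⟨e, he⟩ := hpair j u huj b hb hba.symm
      exact ⟨e, by simpa [huv] using (Finset.insert_subset_iff.1 he).1⟩
    · exact hpair i u hu v hv huv
  exact ⟨hcard, by simp only [capacity, hcard]⟩

/-- an irreducible sequence of coloring channels has the same
number of output tuples (hence the same capacity) as the sequence of 2-element
channels given by the edges of its pairs graph. -/
theorem pairs_graph_capacity (q t : ℕ) (hq : 2 ≤ q) (ht : 2 ≤ t)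
    (𝓘 : Fin t → Finset (Fin q)) (hne : ∀ i, (𝓘 i).Nonempty)
    (hsub : ∀ i j : Fin t, i ≠ j → ¬ 𝓘 i ⊆ 𝓘 j)
    (hnsep : ¬ ∃ S : Finset (Fin t), S.Nonempty ∧ S ≠ Finset.univ ∧
      (S.biUnion 𝓘) ∩ (Sᶜ.biUnion 𝓘) = ∅) :
    (∀ n : ℕ, (channelOutputs 𝓘 n).ncard =
      (channelOutputs
        (fun e : {e : Finset (Fin q) // e.card = 2 ∧ ∃ i, e ⊆ 𝓘 i} => e.1) n).ncard) ∧
    capacity 𝓘 =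
      capacity (fun e : {e : Finset (Fin q) // e.card = 2 ∧ ∃ i, e ⊆ 𝓘 i} => e.1) :=
  pairs_graph_capacity_general q t ht 𝓘 hsub hnsep
end
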